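/- Fix η ∈ ℝ^m and assume there exist a neighbourhood U of η and an integrable function g with (1 + ‖s(x)‖²) e^{η'⬝s(x)} ≤ g(x) for all η' ∈ U and μ-a.e. x. Then the moment map ω(η') = ∫ s(x) e^{η'⬝s(x)} dμ(x) (equal to the gradient of the partition function η' ↦ Z_{η'} = ∫ e^{η'⬝s} dμ) is differentiable at η, and its Fréchet derivative at η is the linear map on ℝ^m given by the matrix ∫ s(x) s(x)ᵀ e^{η⬝s(x)} dμ(x) = Z_η F_η. -/

import Mathlib

/-!
Differentiation under the integral sign. For `φ = 1` and `φ = sᵢ` the integrand `φ e^{η'⬝s}` has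
`η'`-derivative `φ s e^{η'⬝s}`, of norm at most `(m + 1)(1 + ∑ sⱼ²) e^{η'⬝s} ≤ (m + 1) g` on a
neighbourhood of `η`. The hypothesis only gives this off a null set depending on `η'`; as the
bound is closed in `η'`, it suffices to impose it on a countable dense set, which makes the null
set uniform.
-/

open MeasureTheory Matrix

noncomputable section

def dotCLM {m : ℕ} (g : Fin m → ℝ) : (Fin m → ℝ) →L[ℝ] ℝ :=
  ∑ i, g i • ContinuousLinearMap.proj i

theorem ae_forall_mem_of_isOpen_of_isClosed {α X : Type*} [TopologicalSpace α]
    [TopologicalSpace.SeparableSpace α] [MeasurableSpace X] {μ : Measure X} {U : Set α}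
    (hU : IsOpen U) {P : α → X → Prop} (hP : ∀ x, IsClosed {a | P a x})
    (h : ∀ a ∈ U, ∀ᵐ x ∂μ, P a x) : ∀ᵐ x ∂μ, ∀ a ∈ U, P a x := by
  obtain ⟨D, hDc, hDd⟩ := TopologicalSpace.exists_countable_dense α
  have hD : ∀ᵐ x ∂μ, ∀ a ∈ U ∩ D, P a x :=
    (ae_ball_iff (hDc.mono Set.inter_subset_right)).2 fun a ha => h a ha.1
  filter_upwards [hD] with x hx a ha
  exact closure_minimal hx (hP x) (hDd.open_subset_closure_inter hU ha)

section dotCLM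

variable {m : ℕ}

theorem dotCLM_apply (g v : Fin m → ℝ) : dotCLM g v = g ⬝ᵥ v := by
  simp [dotCLM, dotProduct]

theorem smul_dotCLM (c : ℝ) (g : Fin m → ℝ) : c • dotCLM g = dotCLM (c • g) := by
  simp [dotCLM, Finset.smul_sum, smul_smul]

theorem continuous_dotCLM : Continuous (dotCLM : (Fin m → ℝ) → _) :=
  continuous_finsetSum _ fun i _ => (continuous_apply i).smul continuous_const

theorem norm_dotCLM_le (g : Fin m → ℝ) : ‖dotCLM g‖ ≤ ∑ i, |g i| := by
  refine ContinuousLinearMap.opNorm_le_bound _ (by positivity) fun v => ?_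
  rw [dotCLM_apply, Finset.sum_mul]
  refine (Finset.abs_sum_le_sum_abs _ _).trans (Finset.sum_le_sum fun i _ => ?_)
  rw [abs_mul]
  exact mul_le_mul_of_nonneg_left (norm_le_pi_norm v i) (abs_nonneg _)

theorem hasFDerivAt_dotProduct (v η : Fin m → ℝ) :
    HasFDerivAt (fun η' : Fin m → ℝ => η' ⬝ᵥ v) (dotCLM v) η := by
  convert (dotCLM v).hasFDerivAt using 1
  ext η'
  rw [dotCLM_apply, dotProduct_comm]

theorem integral_dotCLM {X : Type*} [MeasurableSpace X] {μ : Measure X} {f : X → Fin m → ℝ}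
    (hf : ∀ i, Integrable (fun x => f x i) μ) :
    ∫ x, dotCLM (f x) ∂μ = dotCLM fun i => ∫ x, f x i ∂μ := by
  simp only [dotCLM]
  rw [integral_finsetSum _ fun i _ => (hf i).smul_const _]
  simp_rw [integral_smul_const]

end dotCLM

section SumSq

variable {ι : Type*} [Fintype ι]

theorem abs_le_one_add_sq (a : ℝ) : |a| ≤ 1 + a ^ 2 := by
  nlinarith [sq_nonneg (|a| - 1), sq_abs a, abs_nonneg a]

theorem sq_le_sum_sq (t : ι → ℝ) (i : ι) : t i ^ 2 ≤ ∑ j, t j ^ 2 :=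
  Finset.single_le_sum (f := fun j => t j ^ 2) (fun _ _ => sq_nonneg _) (Finset.mem_univ i)

theorem one_add_sum_abs_le (t : ι → ℝ) :
    1 + ∑ j, |t j| ≤ (Fintype.card ι + 1) * (1 + ∑ j, t j ^ 2) := by
  have h : ∑ j, |t j| ≤ ∑ j, (1 + t j ^ 2) :=
    Finset.sum_le_sum fun j _ => abs_le_one_add_sq (t j)
  rw [Finset.sum_add_distrib] at h
  have : 0 ≤ (Fintype.card ι : ℝ) * ∑ j, t j ^ 2 := by positivity
  simp only [Finset.sum_const, Finset.card_univ, nsmul_eq_mul, mul_one] at h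
  linarith

theorem abs_mul_one_add_sum_abs_le (t : ι → ℝ) (i : ι) :
    |t i| * (1 + ∑ j, |t j|) ≤ (Fintype.card ι + 1) * (1 + ∑ j, t j ^ 2) := by
  have hi : |t i| ≤ 1 + ∑ j, t j ^ 2 :=
    (abs_le_one_add_sq _).trans (by linarith [sq_le_sum_sq t i])
  have hij : ∑ j, |t i| * |t j| ≤ ∑ _j : ι, ∑ j, t j ^ 2 :=
    Finset.sum_le_sum fun j _ => by
      nlinarith [sq_le_sum_sq t i, sq_le_sum_sq t j, sq_abs (t i), sq_abs (t j),
        sq_nonneg (|t i| - |t j|)]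
  simp only [Finset.sum_const, Finset.card_univ, nsmul_eq_mul] at hij
  have : 0 ≤ ∑ j, t j ^ 2 := by positivity
  rw [mul_add, mul_one, Finset.mul_sum]
  nlinarith

end SumSq

section ExpFamily

variable {X : Type*} [MeasurableSpace X] {μ : Measure X} {m : ℕ} {s : X → Fin m → ℝ}

theorem measurable_dotProduct_left (hs : Measurable s) (η : Fin m → ℝ) :
    Measurable fun x => η ⬝ᵥ s x := by
  simpa only [Function.comp_def, dotCLM_apply] using (dotCLM η).measurable.comp hs

theorem hasFDerivAt_mul_exp_dotProduct (a : ℝ) (v η : Fin m → ℝ) :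
    HasFDerivAt (fun η' : Fin m → ℝ => a * Real.exp (η' ⬝ᵥ v))
      (dotCLM fun j => a * v j * Real.exp (η ⬝ᵥ v)) η := by
  refine (((hasFDerivAt_dotProduct v η).exp).const_mul a).congr_fderiv ?_
  rw [smul_smul, smul_dotCLM]
  congr 1
  ext j
  simp only [Pi.smul_apply, smul_eq_mul]
  ring

theorem hasFDerivAt_integral_mul_exp_dotProduct (hs : Measurable s) {φ : X → ℝ}
    (hφ : Measurable φ) {η : Fin m → ℝ} {V : Set (Fin m → ℝ)} (hV : V ∈ nhds η) {G : X → ℝ}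
    (hG : Integrable G μ)
    (hbound : ∀ᵐ x ∂μ, ∀ η' ∈ V,
      |φ x| * (1 + ∑ j, |s x j|) * Real.exp (η' ⬝ᵥ s x) ≤ G x) :
    HasFDerivAt (fun η' : Fin m → ℝ => ∫ x, φ x * Real.exp (η' ⬝ᵥ s x) ∂μ)
      (dotCLM fun j => ∫ x, φ x * s x j * Real.exp (η ⬝ᵥ s x) ∂μ) η := by
  have hexp : ∀ η' : Fin m → ℝ, Measurable fun x => Real.exp (η' ⬝ᵥ s x) :=
    fun η' => (measurable_dotProduct_left hs η').exp
  have hsj : ∀ j, Measurable fun x => s x j := fun j => (measurable_pi_apply j).comp hs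
  have hη : ∀ᵐ x ∂μ, |φ x| * (1 + ∑ j, |s x j|) * Real.exp (η ⬝ᵥ s x) ≤ G x :=
    hbound.mono fun x hx => hx η (mem_of_mem_nhds hV)
  have hF_int : Integrable (fun x => φ x * Real.exp (η ⬝ᵥ s x)) μ := by
    refine hG.mono' (hφ.mul (hexp η)).aestronglyMeasurable (hη.mono fun x hx => ?_)
    have : 0 ≤ |φ x| * (∑ j, |s x j|) * Real.exp (η ⬝ᵥ s x) := by positivity
    rw [Real.norm_eq_abs, abs_mul, Real.abs_exp]
    linarith
  have hF'_int (j) : Integrable (fun x => φ x * s x j * Real.exp (η ⬝ᵥ s x)) μ := by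
    refine hG.mono' ((hφ.mul (hsj j)).mul (hexp η)).aestronglyMeasurable
      (hη.mono fun x hx => ?_)
    have hj : |s x j| ≤ ∑ j, |s x j| :=
      Finset.single_le_sum (f := fun j => |s x j|) (fun _ _ => abs_nonneg _) (Finset.mem_univ j)
    have : |φ x| * |s x j| * Real.exp (η ⬝ᵥ s x)
        ≤ |φ x| * (1 + ∑ j, |s x j|) * Real.exp (η ⬝ᵥ s x) := by gcongr; linarith
    rw [Real.norm_eq_abs, abs_mul, abs_mul, Real.abs_exp]
    linarith
  have h_bound : ∀ᵐ x ∂μ, ∀ η' ∈ V,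
      ‖dotCLM fun j => φ x * s x j * Real.exp (η' ⬝ᵥ s x)‖ ≤ G x := by
    filter_upwards [hbound] with x hx η' hη'
    calc _ ≤ ∑ j, |φ x * s x j * Real.exp (η' ⬝ᵥ s x)| := norm_dotCLM_le _
      _ = |φ x| * (∑ j, |s x j|) * Real.exp (η' ⬝ᵥ s x) := by
        simp only [abs_mul, Real.abs_exp, Finset.mul_sum, Finset.sum_mul]
      _ ≤ |φ x| * (1 + ∑ j, |s x j|) * Real.exp (η' ⬝ᵥ s x) := by gcongr; linarith
      _ ≤ G x := hx η' hη'
  have hF'_meas : AEStronglyMeasurable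
      (fun x => dotCLM fun j => φ x * s x j * Real.exp (η ⬝ᵥ s x)) μ :=
    continuous_dotCLM.comp_aestronglyMeasurable
      (measurable_pi_lambda _ fun j => (hφ.mul (hsj j)).mul (hexp η)).aestronglyMeasurable
  rw [← integral_dotCLM hF'_int]
  exact hasFDerivAt_integral_of_dominated_of_fderiv_le hV
    (.of_forall fun η' => (hφ.mul (hexp η')).aestronglyMeasurable) hF_int hF'_meas h_bound hG
    (.of_forall fun x η' _ => hasFDerivAt_mul_exp_dotProduct (φ x) (s x) η')

end ExpFamily

/-- If `(1 + ‖s(x)‖²) e^{η'⬝s(x)} ≤ g(x)` for all `η'` in a neighbourhood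
of `η` with `g` integrable, then the moment map `ω(η') = ∫ s e^{η'⬝s} dμ` (which is the
gradient of the partition function `η' ↦ Z_{η'}`) is differentiable at `η`, with Fréchet
derivative the linear map given by the matrix `∫ s sᵀ e^{η⬝s} dμ = Z_η F_η`. -/
theorem stmt6
    {X : Type*} [MeasurableSpace X] (μ : Measure X)
    {m : ℕ} (s : X → Fin m → ℝ) (hs : Measurable s)
    (η : Fin m → ℝ)
    (U : Set (Fin m → ℝ)) (hU : U ∈ nhds η)
    (g : X → ℝ) (hg : Integrable g μ)
    (hdom : ∀ η' ∈ U, ∀ᵐ x ∂μ,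
      (1 + ∑ i, (s x i) ^ 2) * Real.exp (η' ⬝ᵥ s x) ≤ g x) :
    -- the moment map is the gradient of the partition function at `η`
    HasFDerivAt (fun η' : Fin m → ℝ => ∫ x, Real.exp (η' ⬝ᵥ s x) ∂μ)
      (dotCLM fun i => ∫ x, s x i * Real.exp (η ⬝ᵥ s x) ∂μ) η
    ∧
    -- the moment map is differentiable at `η` with derivative the matrix `∫ s sᵀ q_η dμ`
    HasFDerivAt (fun η' : Fin m → ℝ => fun i => ∫ x, s x i * Real.exp (η' ⬝ᵥ s x) ∂μ)
      (LinearMap.toContinuousLinearMap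
        (Matrix.mulVecLin
          (Matrix.of fun i j => ∫ x, s x i * s x j * Real.exp (η ⬝ᵥ s x) ∂μ))) η := by
  have hdom' : ∀ᵐ x ∂μ, ∀ η' ∈ interior U,
      (1 + ∑ i, s x i ^ 2) * Real.exp (η' ⬝ᵥ s x) ≤ g x :=
    ae_forall_mem_of_isOpen_of_isClosed isOpen_interior
      (fun x => isClosed_le (by fun_prop) continuous_const)
      fun η' h => hdom η' (interior_subset h)
  have hbound (φ : X → ℝ)
      (hφ : ∀ x, |φ x| * (1 + ∑ j, |s x j|) ≤ (m + 1) * (1 + ∑ j, s x j ^ 2)) :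
      ∀ᵐ x ∂μ, ∀ η' ∈ interior U,
        |φ x| * (1 + ∑ j, |s x j|) * Real.exp (η' ⬝ᵥ s x) ≤ (m + 1) * g x := by
    filter_upwards [hdom'] with x hx η' hη'
    calc _ ≤ (m + 1) * (1 + ∑ j, s x j ^ 2) * Real.exp (η' ⬝ᵥ s x) :=
        mul_le_mul_of_nonneg_right (hφ x) (Real.exp_pos _).le
      _ ≤ (m + 1) * g x := by rw [mul_assoc]; gcongr; exact hx η' hη'
  have hV := interior_mem_nhds.2 hU
  refine ⟨?_, hasFDerivAt_pi'' fun i => ?_⟩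
  · simpa using hasFDerivAt_integral_mul_exp_dotProduct hs measurable_const hV (hg.const_mul _)
      (hbound (fun _ => 1) fun x => by simpa using one_add_sum_abs_le (s x))
  · refine (hasFDerivAt_integral_mul_exp_dotProduct hs ((measurable_pi_apply i).comp hs) hV
      (hg.const_mul _) (hbound _ fun x => by simpa using abs_mul_one_add_sum_abs_le (s x) i))
      |>.congr_fderiv ?_
    ext v
    simp [dotCLM_apply, mulVec, dotProduct]
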